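/- arXiv:2605.13362 — 6 statements merged into one kernel-verified Lean document; each statement's English description precedes it below -/
import Mathlib

section
/- Let σ ∈ [1/2, 1) with either σ > 1/2 or n odd, and let φ_σ(u) be the ⌈σn⌉-th largest entry of u. Suppose at least ⌈σn⌉ members share an ideal element w with w ≠ s. Then: (i) the proposal w is supported with φ_σ(u(w)) = d(w, s) > 0; and (ii) for every proposal p' ≠ w, φ_σ(u(p')) < φ_σ(u(w)). Hence w is the unique winner of the constitutional governance rule. -/
/-- The `k`-th largest entry of a vector (`k` counted from 1). -/
noncomputable def kthLargest {n : ℕ} (u : Fin n → ℝ) (k : ℕ) : ℝ :=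
  ((List.ofFn u).insertionSort (fun a b => b ≤ a)).getD (k - 1) 0

lemma sorted_getD_le {L : List ℝ} (hs : L.Pairwise (fun a b => b ≤ a)) {k : ℕ}
    (hk1 : 1 ≤ k) (hkn : k ≤ L.length) {t : ℝ}
    (h : L.countP (fun x => decide (t < x)) < k) : L.getD (k-1) 0 ≤ t := by
  by_contra hc
  push_neg at hc
  have hklt : k - 1 < L.length := by omega
  rw [List.getD_eq_getElem L 0 hklt] at hc
  have hall : ∀ a ∈ L.take k, t < a := by
    intro a ha
    obtain ⟨i, hi, rfl⟩ := List.mem_iff_getElem.mp ha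
    have hik : i < k := by simp [List.length_take] at hi; omega
    rw [List.getElem_take]
    rcases Nat.lt_or_ge i (k-1) with h' | h'
    · have := List.pairwise_iff_getElem.mp hs i (k-1) (by omega) hklt (by omega)
      exact lt_of_lt_of_le hc this
    · have : i = k - 1 := by omega
      subst this; exact hc
  have h1 : (L.take k).countP (fun x => decide (t < x)) = (L.take k).length := by
    rw [List.countP_eq_length]
    intro a ha; simpa using hall a ha
  have h2 : k ≤ L.countP (fun x => decide (t < x)) := by
    conv_rhs => rw [← List.take_append_drop k L]
    rw [List.countP_append, h1, List.length_take]
    omega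
  omega

lemma le_sorted_getD {L : List ℝ} (hs : L.Pairwise (fun a b => b ≤ a)) {k : ℕ}
    (hk1 : 1 ≤ k) (hkn : k ≤ L.length) {t : ℝ}
    (h : k ≤ L.countP (fun x => decide (t ≤ x))) : t ≤ L.getD (k-1) 0 := by
  by_contra hc
  push_neg at hc
  have hklt : k - 1 < L.length := by omega
  rw [List.getD_eq_getElem L 0 hklt] at hc
  have hz : (L.drop (k-1)).countP (fun x => decide (t ≤ x)) = 0 := by
    rw [List.countP_eq_zero]
    intro a ha
    obtain ⟨i, hi, rfl⟩ := List.mem_iff_getElem.mp ha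
    have hlen : i < L.length - (k-1) := by simpa using hi
    rw [List.getElem_drop]
    simp only [decide_eq_true_eq, not_le]
    rcases Nat.eq_zero_or_pos i with h' | h'
    · subst h'; simpa using hc
    · have := List.pairwise_iff_getElem.mp hs (k-1) (k-1+i) hklt (by omega) (by omega)
      calc L[k-1+i] ≤ L[k-1] := this
        _ < t := hc
  have : L.countP (fun x => decide (t ≤ x)) ≤ k - 1 := by
    conv_lhs => rw [← List.take_append_drop (k-1) L]
    rw [List.countP_append, hz]
    have := List.countP_le_length (p := fun x => decide (t ≤ x)) (l := L.take (k-1))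
    simp [List.length_take] at this ⊢
    omega
  omega

lemma countP_ofFn_eq_card {n : ℕ} (u : Fin n → ℝ) (p : ℝ → Bool) :
    (List.ofFn u).countP p = (Finset.univ.filter fun i => p (u i)).card := by
  classical
  rw [List.ofFn_eq_map, List.countP_map]
  rw [Finset.card_def, Finset.filter_val, ← Multiset.countP_eq_card_filter]
  have : (Finset.univ : Finset (Fin n)).val = ↑(List.finRange n) := rfl
  rw [this, Multiset.coe_countP]
  congr 1; ext b; simp [Function.comp]

lemma kthLargest_le {n : ℕ} (u : Fin n → ℝ) {k : ℕ} (hk1 : 1 ≤ k) (hkn : k ≤ n) {t : ℝ}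
    (h : (Finset.univ.filter fun i => t < u i).card < k) : kthLargest u k ≤ t := by
  classical
  unfold kthLargest
  have hs : ((List.ofFn u).insertionSort (fun a b => b ≤ a)).Pairwise (fun a b => b ≤ a) := by
    haveI : Std.Total (fun a b : ℝ => b ≤ a) := ⟨fun a b => le_total b a⟩
    haveI : IsTrans ℝ (fun a b : ℝ => b ≤ a) := ⟨fun a b c h1 h2 => le_trans h2 h1⟩
    exact List.pairwise_insertionSort _ _
  apply sorted_getD_le hs hk1
  · rw [List.length_insertionSort, List.length_ofFn]; exact hkn
  · rw [(List.perm_insertionSort _ _).countP_eq, countP_ofFn_eq_card]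
    simpa using h

lemma le_kthLargest {n : ℕ} (u : Fin n → ℝ) {k : ℕ} (hk1 : 1 ≤ k) (hkn : k ≤ n) {t : ℝ}
    (h : k ≤ (Finset.univ.filter fun i => t ≤ u i).card) : t ≤ kthLargest u k := by
  classical
  unfold kthLargest
  have hs : ((List.ofFn u).insertionSort (fun a b => b ≤ a)).Pairwise (fun a b => b ≤ a) := by
    haveI : Std.Total (fun a b : ℝ => b ≤ a) := ⟨fun a b => le_total b a⟩
    haveI : IsTrans ℝ (fun a b : ℝ => b ≤ a) := ⟨fun a b c h1 h2 => le_trans h2 h1⟩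
    exact List.pairwise_insertionSort _ _
  apply le_sorted_getD hs hk1
  · rw [List.length_insertionSort, List.length_ofFn]; exact hkn
  · rw [(List.perm_insertionSort _ _).countP_eq, countP_ofFn_eq_card]
    simpa using h

/-- σ-majoritarity of the generalised median. If at least `⌈σn⌉` members
share an ideal `w ≠ s`, then `w` is supported with score `d(w,s) > 0`, and every other
proposal scores strictly less; hence `w` is the unique winner. -/
theorem generalised_median_majoritarian
    {X : Type*} [MetricSpace X] {n : ℕ} (hn : 0 < n)
    (v : Fin n → X) (s : X)
    (σ : ℝ) (hσ : 1/2 ≤ σ ∧ σ < 1) (hmaj : 1/2 < σ ∨ Odd n)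
    (k : ℕ) (hk : k = ⌈σ * n⌉₊)
    (w : X) (hw : w ≠ s)
    (hshare : k ≤ {i : Fin n | v i = w}.ncard) :
    (k ≤ {i : Fin n | 0 < dist (v i) s - dist (v i) w}.ncard) ∧
    kthLargest (fun i => dist (v i) s - dist (v i) w) k = dist w s ∧
    0 < dist w s ∧
    (∀ p' : X, p' ≠ w →
      kthLargest (fun i => dist (v i) s - dist (v i) p') k <
        kthLargest (fun i => dist (v i) s - dist (v i) w) k) := by
  classical
  obtain ⟨hσ1, hσ2⟩ := hσ
  have hds : 0 < dist w s := dist_pos.mpr hw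
  have hnR : (0:ℝ) < n := by exact_mod_cast hn
  -- basic bounds on k
  have hk1 : 1 ≤ k := by
    rw [hk]
    exact Nat.ceil_pos.mpr (by nlinarith)
  have hkn : k ≤ n := by
    rw [hk]
    exact Nat.ceil_le.mpr (by nlinarith)
  have hklek : (σ * n : ℝ) ≤ k := by rw [hk]; exact Nat.le_ceil _
  have hn2k : n < 2 * k := by
    rcases hmaj with hσ' | hodd
    · have : (n:ℝ) < 2 * k := by nlinarith
      exact_mod_cast this
    · have h2 : (n:ℝ) ≤ 2 * k := by nlinarith
      have h2' : n ≤ 2 * k := by exact_mod_cast h2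
      obtain ⟨m, hm⟩ := hodd
      omega
  -- the share set as a finset
  have hshare' : k ≤ (Finset.univ.filter fun i => v i = w).card := by
    have : {i : Fin n | v i = w}.ncard = (Finset.univ.filter fun i => v i = w).card := by
      rw [Set.ncard_eq_toFinset_card', Set.toFinset_setOf]
    rw [this] at hshare; exact hshare
  -- value of u_w on the share set
  have hval : ∀ i : Fin n, v i = w → dist (v i) s - dist (v i) w = dist w s := by
    intro i hi; rw [hi, dist_self]; ring
  -- upper bound everywhere
  have hub : ∀ i : Fin n, dist (v i) s - dist (v i) w ≤ dist w s := by
    intro i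
    have := dist_triangle (v i) w s
    linarith [dist_comm w (v i) ▸ this]
  refine ⟨?_, ?_, hds, ?_⟩
  · -- support
    refine le_trans hshare (Set.ncard_le_ncard ?_ (Set.toFinite _))
    intro i hi
    simp only [Set.mem_setOf_eq] at *
    rw [hval i hi]; exact hds
  · -- score equals dist w s
    apply le_antisymm
    · apply kthLargest_le _ hk1 hkn
      have : (Finset.univ.filter fun i => dist w s < dist (v i) s - dist (v i) w) = ∅ := by
        apply Finset.filter_false_of_mem
        intro i _
        exact not_lt.mpr (hub i)
      rw [this]; simpa using (show 0 < k by omega)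
    · apply le_kthLargest _ hk1 hkn
      refine le_trans hshare' (Finset.card_le_card ?_)
      intro i hi
      simp only [Finset.mem_filter, Finset.mem_univ, true_and] at *
      rw [hval i hi]
  · -- every other proposal scores strictly less
    intro p' hp'
    have hwp' : 0 < dist w p' := dist_pos.mpr (Ne.symm hp')
    set t : ℝ := dist w s - dist w p' with ht
    have h1 : kthLargest (fun i => dist (v i) s - dist (v i) p') k ≤ t := by
      apply kthLargest_le _ hk1 hkn
      have hsub : (Finset.univ.filter fun i => t < dist (v i) s - dist (v i) p') ⊆
          (Finset.univ.filter fun i => ¬ (v i = w)) := by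
        intro i hi
        simp only [Finset.mem_filter, Finset.mem_univ, true_and] at *
        intro hvi
        rw [hvi] at hi
        simp [ht] at hi
      have hcompl : (Finset.univ.filter fun i => ¬ (v i = w)).card = n - (Finset.univ.filter fun i => v i = w).card := by
        have := Finset.card_filter_add_card_filter_not (s := (Finset.univ : Finset (Fin n))) (p := fun i => v i = w)
        simp only [Finset.card_univ, Fintype.card_fin] at this
        omega
      have := Finset.card_le_card hsub
      omega
    have h2 : t < dist w s := by rw [ht]; linarith
    have h3 : kthLargest (fun i => dist (v i) s - dist (v i) w) k = dist w s := by
      apply le_antisymm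
      · apply kthLargest_le _ hk1 hkn
        have : (Finset.univ.filter fun i => dist w s < dist (v i) s - dist (v i) w) = ∅ := by
          apply Finset.filter_false_of_mem
          intro i _
          exact not_lt.mpr (hub i)
        rw [this]; simpa using (show 0 < k by omega)
      · apply le_kthLargest _ hk1 hkn
        refine le_trans hshare' (Finset.card_le_card ?_)
        intro i hi
        simp only [Finset.mem_filter, Finset.mem_univ, true_and] at *
        rw [hval i hi]
    rw [h3]
    exact lt_of_le_of_lt h1 h2
end

section
/- Self-defeating winner swap: Suppose under sincere voting, proposals W₀ and W̃ have generalised median scores φ_σ(u(W₀)) > φ_σ(u(W̃)) > 0. Suppose member i unilaterally misreports and, under the misreport, φ_σ(u(W₀)) strictly decreases and φ_σ(u(W̃)) strictly increases. Then member i's sincere utilities satisfy u(v_i*, W₀) > u(v_i*, W̃): the misreporter strictly prefers the original winner W₀ to W̃. -/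
open Finset

theorem List.SortedGE.le_getElem_iff_lt_countP {α : Type*} [LinearOrder α] {L : List α}
    (hL : L.SortedGE) {m : ℕ} (hm : m < L.length) (c : α) :
    c ≤ L[m] ↔ m < L.countP (fun x => c ≤ x) := by
  constructor
  · intro hc
    have hprefix : ∀ x ∈ L.take (m + 1), decide (c ≤ x) = true := by
      intro x hx
      obtain ⟨j, hj, rfl⟩ := List.mem_take_iff_getElem.mp hx
      simpa using hc.trans (hL.getElem_ge_getElem_of_le (by omega))
    calc m < (L.take (m + 1)).countP (fun x => c ≤ x) := by
          rw [List.countP_eq_length.mpr hprefix, List.length_take]; omega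
      _ ≤ L.countP (fun x => c ≤ x) := (L.take_sublist _).countP_le
  · intro hcount
    by_contra! hlt
    have hsuffix : (L.drop m).countP (fun x => c ≤ x) = 0 := by
      refine List.countP_eq_zero.mpr fun x hx => ?_
      obtain ⟨j, hj, rfl⟩ := List.mem_drop_iff_getElem.mp hx
      simpa using (hL.getElem_ge_getElem_of_le (by omega)).trans_lt hlt
    have hprefix : (L.take m).countP (fun x => c ≤ x) ≤ m :=
      List.countP_le_length.trans (by simp)
    rw [← L.take_append_drop m, List.countP_append] at hcount
    omega

theorem List.countP_ofFn {α : Type*} {n : ℕ} (u : Fin n → α) (p : α → Bool) :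
    (List.ofFn u).countP p = #{j | p (u j)} := by
  rw [List.ofFn_eq_map, List.countP_map, card_def, filter_val, Fin.univ_def]
  simp only [List.countP_eq_length_filter, Multiset.filter_coe, Bool.decide_eq_true,
    Multiset.coe_card]
  rfl

section kthLargest

variable {n : ℕ}

-- `k = 0` reads the same entry as `k = 1`, and out-of-range `k` gives the junk value `0`.
theorem kthLargest_of_le (u : Fin n → ℝ) {k : ℕ} (hk : n ≤ k - 1) : kthLargest u k = 0 := by
  simp [kthLargest, hk]

theorem le_kthLargest_iff (u : Fin n → ℝ) {k : ℕ} (hk : k - 1 < n) (c : ℝ) :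
    c ≤ kthLargest u k ↔ k - 1 < #{j | c ≤ u j} := by
  have hsorted : ((List.ofFn u).insertionSort (fun a b => b ≤ a)).SortedGE :=
    List.sortedGE_insertionSort
  have hlen : k - 1 < ((List.ofFn u).insertionSort (fun a b => b ≤ a)).length := by simpa
  rw [kthLargest, List.getD_eq_getElem _ _ hlen, hsorted.le_getElem_iff_lt_countP hlen,
    ((List.ofFn u).perm_insertionSort _).countP_eq, List.countP_ofFn]
  simp

theorem card_filter_le_card_filter_of_eq_of_ne {u v : Fin n → ℝ} {i : Fin n}
    (huv : ∀ j, j ≠ i → u j = v j) {c : ℝ} (hi : c ≤ u i → c ≤ v i) :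
    #{j | c ≤ u j} ≤ #{j | c ≤ v j} := by
  refine card_le_card fun j => ?_
  simp only [mem_filter, mem_univ, true_and]
  by_cases hj : j = i
  · exact hj ▸ hi
  · exact fun hc => hc.trans (huv j hj).le

variable {u v : Fin n → ℝ} {i : Fin n} {k : ℕ}

theorem le_apply_of_kthLargest_lt (huv : ∀ j, j ≠ i → u j = v j)
    (h : kthLargest v k < kthLargest u k) : kthLargest u k ≤ u i := by
  by_cases hk : k - 1 < n
  · by_contra! hi
    have hu := (le_kthLargest_iff u hk _).mp le_rfl
    have hv := (le_kthLargest_iff v hk (kthLargest u k)).not.mp h.not_ge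
    have := card_filter_le_card_filter_of_eq_of_ne huv fun h' => absurd h' hi.not_ge
    omega
  · simp [kthLargest_of_le _ (not_lt.mp hk)] at h

theorem apply_le_of_kthLargest_lt (huv : ∀ j, j ≠ i → u j = v j)
    (h : kthLargest u k < kthLargest v k) : u i ≤ kthLargest u k := by
  by_cases hk : k - 1 < n
  · by_contra! hi
    set t := min (u i) (kthLargest v k)
    have hu := (le_kthLargest_iff u hk t).not.mp (lt_min hi h).not_ge
    have hv := (le_kthLargest_iff v hk t).mp (min_le_right _ _)
    have := card_filter_le_card_filter_of_eq_of_ne (c := t) (fun j hj => (huv j hj).symm)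
      fun _ => min_le_left _ _
    omega
  · simp [kthLargest_of_le _ (not_lt.mp hk)] at h

end kthLargest

theorem self_defeating_winner_swap_general
    {X : Type*} [MetricSpace X] {n : ℕ}
    (s : X) (vstar : Fin n → X)
    (k : ℕ)
    (i : Fin n) (r : Fin n → X)
    (hr : ∀ j : Fin n, j ≠ i → r j = vstar j)
    (W₀ Wt : X)
    (hgt : kthLargest (fun j => dist (vstar j) s - dist (vstar j) Wt) k <
            kthLargest (fun j => dist (vstar j) s - dist (vstar j) W₀) k)
    (hdec : kthLargest (fun j => dist (r j) s - dist (r j) W₀) k <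
            kthLargest (fun j => dist (vstar j) s - dist (vstar j) W₀) k)
    (hinc : kthLargest (fun j => dist (vstar j) s - dist (vstar j) Wt) k <
            kthLargest (fun j => dist (r j) s - dist (r j) Wt) k) :
    dist (vstar i) s - dist (vstar i) Wt < dist (vstar i) s - dist (vstar i) W₀ := by
  have hW₀ := le_apply_of_kthLargest_lt (i := i) (fun j hj => by simp only [hr j hj]) hdec
  have hWt := apply_le_of_kthLargest_lt (i := i) (fun j hj => by simp only [hr j hj]) hinc
  exact hWt.trans_lt (hgt.trans_le hW₀)

/-- Self-defeating winner swap. If under sincere voting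
`φ_σ(u(W₀)) > φ_σ(u(W̃)) > 0`, and a unilateral misreport by member `i` strictly
decreases `φ_σ(u(W₀))` and strictly increases `φ_σ(u(W̃))`, then member `i` sincerely
strictly prefers `W₀` to `W̃`. -/
theorem self_defeating_winner_swap
    {X : Type*} [MetricSpace X] {n : ℕ}
    (s : X) (vstar : Fin n → X)
    (σ : ℝ) (hσ : 1/2 ≤ σ ∧ σ < 1) (k : ℕ) (hk : k = ⌈σ * n⌉₊)
    (i : Fin n) (r : Fin n → X)
    (hr : ∀ j : Fin n, j ≠ i → r j = vstar j)
    (W₀ Wt : X)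
    (hgt : kthLargest (fun j => dist (vstar j) s - dist (vstar j) Wt) k <
            kthLargest (fun j => dist (vstar j) s - dist (vstar j) W₀) k)
    (hpos : 0 < kthLargest (fun j => dist (vstar j) s - dist (vstar j) Wt) k)
    (hdec : kthLargest (fun j => dist (r j) s - dist (r j) W₀) k <
            kthLargest (fun j => dist (vstar j) s - dist (vstar j) W₀) k)
    (hinc : kthLargest (fun j => dist (vstar j) s - dist (vstar j) Wt) k <
            kthLargest (fun j => dist (r j) s - dist (r j) Wt) k) :
    dist (vstar i) s - dist (vstar i) Wt < dist (vstar i) s - dist (vstar i) W₀ :=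
  self_defeating_winner_swap_general s vstar k i r hr W₀ Wt hgt hdec hinc
end

section
/- 1D weak dominance of sincere voting: In X ⊆ ℝ with d(x, y) = |x − y|, fix σ ∈ [1/2, 1) and suppose the per-round winner is determined as the proposal closest to the appropriate positional vote v_m (the ⌈σn⌉-th order statistic of the reported votes, in the direction of the proposal relative to s). Then for any member i with true ideal v_i*, any unilateral misreport ṽ_i weakly increases the distance from v_i* to the resulting positional vote: |v_i* − v_m'| ≥ |v_i* − v_m⁰|, where v_m⁰ and v_m' are the positional votes under sincere reporting and under the misreport respectively. Consequently the member's true utility for the winner under the misreport is at most their true utility under sincere voting. -/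
/-- The `k`-th smallest entry of a vector (`k` counted from 1): the `k`-th order
statistic in non-decreasing order. -/
noncomputable def kthSmallest {n : ℕ} (u : Fin n → ℝ) (k : ℕ) : ℝ :=
  ((List.ofFn u).insertionSort (fun a b => a ≤ b)).getD (k - 1) 0


/-- In a sorted list, if the element at index `j` satisfies a downward-closed
predicate, then at least `j+1` elements satisfy it. -/
lemma le_countP_of_sorted {L : List ℝ} (hL : L.Pairwise (· ≤ ·)) {j : ℕ} (hj : j < L.length)
    (p : ℝ → Bool) (hp : ∀ a b : ℝ, a ≤ b → p b = true → p a = true)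
    (h : p L[j] = true) : j + 1 ≤ L.countP p := by
  have htake : (L.take (j+1)).countP p = (L.take (j+1)).length := by
    rw [List.countP_eq_length]
    intro a ha
    obtain ⟨t, ht, rfl⟩ := List.mem_iff_getElem.mp ha
    rw [List.getElem_take]
    have ht' : t < L.length := by simp [List.length_take] at ht; omega
    have hle : L[t] ≤ L[j] := by
      rcases eq_or_lt_of_le (show t ≤ j by
        have := ht; simp [List.length_take] at this; omega) with heq | hlt
      · subst heq; exact le_refl _
      · exact hL.rel_get_of_le (a := ⟨t, ht'⟩) (b := ⟨j, hj⟩) (le_of_lt hlt)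
    exact hp _ _ hle h
  calc j + 1 = (L.take (j+1)).length := by simp [List.length_take]; omega
    _ = (L.take (j+1)).countP p := htake.symm
    _ ≤ (L.take (j+1)).countP p + (L.drop (j+1)).countP p := Nat.le_add_right _ _
    _ = L.countP p := by rw [← List.countP_append, List.take_append_drop]

/-- In a sorted list, if the element at index `j` fails a downward-closed
predicate, then at most `j` elements satisfy it. -/
lemma countP_le_of_sorted {L : List ℝ} (hL : L.Pairwise (· ≤ ·)) {j : ℕ} (hj : j < L.length)
    (p : ℝ → Bool) (hp : ∀ a b : ℝ, a ≤ b → p b = true → p a = true)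
    (h : p L[j] = false) : L.countP p ≤ j := by
  have hdrop : (L.drop j).countP p = 0 := by
    rw [List.countP_eq_zero]
    intro a ha hpa
    obtain ⟨t, ht, rfl⟩ := List.mem_iff_getElem.mp ha
    rw [List.getElem_drop] at hpa
    have ht' : j + t < L.length := by simp [List.length_drop] at ht; omega
    have hle : L[j] ≤ L[j + t] := by
      rcases Nat.eq_zero_or_pos t with rfl | hpos
      · simp
      · exact hL.rel_get_of_le (a := ⟨j, hj⟩) (b := ⟨j + t, ht'⟩) (by simp)
    have := hp _ _ hle hpa
    rw [h] at this; exact Bool.false_ne_true this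
  calc L.countP p = (L.take j).countP p + (L.drop j).countP p := by
        rw [← List.countP_append, List.take_append_drop]
    _ = (L.take j).countP p := by rw [hdrop, Nat.add_zero]
    _ ≤ (L.take j).length := List.countP_le_length
    _ ≤ j := by simp [List.length_take]

/-- 1D weak dominance of sincere voting. A unilateral misreport weakly
increases the distance from the member's true ideal to the `⌈σn⌉`-th positional vote;
consequently the member's true utility for the resulting positional-vote outcome is at
most their true utility under sincere voting. -/
theorem oneD_weak_dominance
    {n : ℕ} (hn : 0 < n)
    (σ : ℝ) (hσ : 1/2 ≤ σ ∧ σ < 1) (k : ℕ) (hk : k = ⌈σ * n⌉₊)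
    (s : ℝ) (v : Fin n → ℝ) (i : Fin n)
    (r : Fin n → ℝ) (hr : ∀ j : Fin n, j ≠ i → r j = v j) :
    |v i - kthSmallest v k| ≤ |v i - kthSmallest r k| ∧
    |v i - s| - |v i - kthSmallest r k| ≤ |v i - s| - |v i - kthSmallest v k| := by
  -- bounds on k
  have hk1 : 1 ≤ k := by
    rw [hk]
    refine Nat.one_le_iff_ne_zero.mpr (Nat.pos_iff_ne_zero.mp ?_)
    refine Nat.ceil_pos.mpr (mul_pos (lt_of_lt_of_le (by norm_num) hσ.1) ?_)
    exact_mod_cast hn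
  have hk2 : k ≤ n := by
    rw [hk]
    refine Nat.ceil_le.mpr ?_
    calc σ * n ≤ 1 * n := by
          apply mul_le_mul_of_nonneg_right (le_of_lt hσ.2); positivity
      _ = (n : ℝ) := one_mul _
  -- lists
  set Lv := (List.ofFn v).insertionSort (fun a b => a ≤ b) with hLv
  set Lr := (List.ofFn r).insertionSort (fun a b => a ≤ b) with hLr
  have hlenv : Lv.length = n := by simp [hLv]
  have hlenr : Lr.length = n := by simp [hLr]
  have hsv : Lv.Pairwise (· ≤ ·) := List.pairwise_insertionSort _ _
  have hsr : Lr.Pairwise (· ≤ ·) := List.pairwise_insertionSort _ _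
  have hjv : k - 1 < Lv.length := by omega
  have hjr : k - 1 < Lr.length := by omega
  have hmv : kthSmallest v k = Lv[k-1] := by
    rw [kthSmallest, ← hLv]; exact List.getD_eq_getElem _ _ hjv
  have hmr : kthSmallest r k = Lr[k-1] := by
    rw [kthSmallest, ← hLr]; exact List.getD_eq_getElem _ _ hjr
  set m := kthSmallest v k with hm
  set m' := kthSmallest r k with hm'
  -- countP transfers
  have hcount : ∀ p : ℝ → Bool, (∀ j : Fin n, p (v j) = true → p (r j) = true) →
      Lv.countP p ≤ Lr.countP p := by
    intro p hpj
    rw [hLv, hLr, (List.perm_insertionSort _ _).countP_eq,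
      (List.perm_insertionSort _ _).countP_eq, List.ofFn_eq_map, List.ofFn_eq_map,
      List.countP_map, List.countP_map]
    exact List.countP_mono_left (fun j _ => hpj j)
  -- first inequality
  have hmain : |v i - m| ≤ |v i - m'| := by
    rcases lt_trichotomy (v i) m with hlt | heq | hgt
    · -- v i < m : show m ≤ m'
      have hcv : Lv.countP (fun y => decide (y < m)) ≤ k - 1 := by
        refine countP_le_of_sorted hsv hjv _ (fun a b hab hb => ?_) ?_
        · simp only [decide_eq_true_eq] at *; exact lt_of_le_of_lt hab hb
        · simp [← hmv]
      have hcr : Lr.countP (fun y => decide (y < m)) ≤ k - 1 := by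
        calc Lr.countP (fun y => decide (y < m))
            ≤ Lv.countP (fun y => decide (y < m)) := by
              rw [hLv, hLr, (List.perm_insertionSort _ _).countP_eq,
                (List.perm_insertionSort _ _).countP_eq, List.ofFn_eq_map,
                List.ofFn_eq_map, List.countP_map, List.countP_map]
              refine List.countP_mono_left (fun j _ hj => ?_)
              simp only [Function.comp, decide_eq_true_eq] at *
              rcases eq_or_ne j i with rfl | hne
              · exact hlt
              · rw [← hr j hne]; exact hj
          _ ≤ k - 1 := hcv
      have hmm' : m ≤ m' := by
        by_contra hcon
        push_neg at hcon
        have : k - 1 + 1 ≤ Lr.countP (fun y => decide (y < m)) := by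
          refine le_countP_of_sorted hsr hjr _ (fun a b hab hb => ?_) ?_
          · simp only [decide_eq_true_eq] at *; exact lt_of_le_of_lt hab hb
          · simp [← hmr]; exact hcon
        omega
      rw [abs_of_neg (by linarith : v i - m < 0), neg_sub]
      calc m - v i ≤ m' - v i := by linarith
        _ = -(v i - m') := by ring
        _ ≤ |v i - m'| := neg_le_abs _
    · simp [heq]
    · -- v i > m : show m' ≤ m
      have hcv : k ≤ Lv.countP (fun y => decide (y ≤ m)) := by
        have := le_countP_of_sorted hsv hjv (fun y => decide (y ≤ m))
          (fun a b hab hb => by simp only [decide_eq_true_eq] at *; linarith)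
          (by simp [← hmv])
        omega
      have hcr : k ≤ Lr.countP (fun y => decide (y ≤ m)) := by
        refine le_trans hcv (hcount _ (fun j hj => ?_))
        simp only [decide_eq_true_eq] at *
        rcases eq_or_ne j i with rfl | hne
        · linarith
        · rw [hr j hne]; exact hj
      have hmm' : m' ≤ m := by
        by_contra hcon
        push_neg at hcon
        have : Lr.countP (fun y => decide (y ≤ m)) ≤ k - 1 := by
          refine countP_le_of_sorted hsr hjr _
            (fun a b hab hb => by simp only [decide_eq_true_eq] at *; linarith) ?_
          simp [← hmr]; exact hcon
        omega
      rw [abs_of_pos (by linarith : 0 < v i - m)]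
      calc v i - m ≤ v i - m' := by linarith
        _ ≤ |v i - m'| := le_abs_self _
  exact ⟨hmain, by linarith⟩
end

section
/- Multidimensional manipulability: In X = ℝ² with Euclidean distance, s = (0,0), σ = 1/2, n = 3, and true ideals v₁* = (1,0), v₂* = (0,1), v₃* = (−1,−1): (i) under sincere voting with proposal set {v₁*, v₂*, v₃*}, no proposal has at least 2 voters with strictly positive utility, so the status quo is retained and member 1's true utility is 0; (ii) if member 1 misreports ṽ₁ = (0.5, 0.5), the proposal (0.5, 0.5) has strictly positive utility for the reported votes ṽ₁ and v₂* (at least 2 positive entries) and positive median utility, so it is supported and wins; (iii) member 1's true utility for (0.5,0.5) is 1 − √(0.5) > 0. Hence the per-round rule is not strategy-proof. -/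
lemma dist2 (x y : EuclideanSpace ℝ (Fin 2)) (a b c d : ℝ)
    (hx : x = !₂[a,b]) (hy : y = !₂[c,d]) :
    dist x y = Real.sqrt ((a-c)^2 + (b-d)^2) := by
  subst hx hy
  rw [EuclideanSpace.dist_eq]
  simp [Fin.sum_univ_two, Real.dist_eq, sq_abs]

lemma kth2 (u : Fin 3 → ℝ) (h1 : u 2 ≤ u 1) (h2 : u 1 ≤ u 0) : kthLargest u 2 = u 1 := by
  simp [kthLargest, List.ofFn_succ, List.insertionSort, List.orderedInsert, h1, h2]

set_option maxHeartbeats 1000000 in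
/-- Multidimensional manipulability of the per-round rule in ℝ² with
Euclidean distance, `s = (0,0)`, `σ = 1/2`, `n = 3`: under sincere voting no proposal
is supported (status quo retained, member 1's utility 0); under the misreport
`ṽ₁ = (0.5, 0.5)` the proposal `(0.5, 0.5)` is supported with positive median utility
and wins; member 1's true utility for it is `1 − √(1/2) > 0`. -/
theorem multidim_not_strategyproof
    (v₁ v₂ v₃ s₀ c : EuclideanSpace ℝ (Fin 2))
    (hv₁ : v₁ = !₂[1, 0]) (hv₂ : v₂ = !₂[0, 1]) (hv₃ : v₃ = !₂[-1, -1])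
    (hs : s₀ = !₂[0, 0]) (hc : c = !₂[0.5, 0.5])
    (sincere : Fin 3 → EuclideanSpace ℝ (Fin 2)) (hsin : sincere = ![v₁, v₂, v₃])
    (r : Fin 3 → EuclideanSpace ℝ (Fin 2)) (hrep : r = ![c, v₂, v₃]) :
    (∀ p ∈ ({v₁, v₂, v₃} : Set (EuclideanSpace ℝ (Fin 2))),
      {j : Fin 3 | 0 < dist (sincere j) s₀ - dist (sincere j) p}.ncard < 2) ∧
    dist v₁ s₀ - dist v₁ s₀ = 0 ∧
    (2 ≤ {j : Fin 3 | 0 < dist (r j) s₀ - dist (r j) c}.ncard) ∧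
    0 < kthLargest (fun j => dist (r j) s₀ - dist (r j) c) 2 ∧
    (∀ p ∈ ({c, v₂, v₃} : Set (EuclideanSpace ℝ (Fin 2))),
      2 ≤ {j : Fin 3 | 0 < dist (r j) s₀ - dist (r j) p}.ncard →
      kthLargest (fun j => dist (r j) s₀ - dist (r j) p) 2 ≤
        kthLargest (fun j => dist (r j) s₀ - dist (r j) c) 2) ∧
    dist v₁ s₀ - dist v₁ c = 1 - Real.sqrt (1/2) ∧
    0 < 1 - Real.sqrt (1/2) := by
  -- distances
  have d1s : dist v₁ s₀ = 1 := by rw [dist2 v₁ s₀ 1 0 0 0 hv₁ hs]; norm_num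
  have d2s : dist v₂ s₀ = 1 := by rw [dist2 v₂ s₀ 0 1 0 0 hv₂ hs]; norm_num
  have d3s : dist v₃ s₀ = Real.sqrt 2 := by
    rw [dist2 v₃ s₀ (-1) (-1) 0 0 hv₃ hs]; norm_num
  have dcs : dist c s₀ = Real.sqrt (1/2) := by
    rw [dist2 c s₀ 0.5 0.5 0 0 hc hs]; norm_num
  have d11 : dist v₁ v₁ = 0 := dist_self _
  have d22 : dist v₂ v₂ = 0 := dist_self _
  have d33 : dist v₃ v₃ = 0 := dist_self _
  have dcc : dist c c = 0 := dist_self _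
  have d21 : dist v₂ v₁ = Real.sqrt 2 := by
    rw [dist2 v₂ v₁ 0 1 1 0 hv₂ hv₁]; norm_num
  have d31 : dist v₃ v₁ = Real.sqrt 5 := by
    rw [dist2 v₃ v₁ (-1) (-1) 1 0 hv₃ hv₁]; norm_num
  have d12 : dist v₁ v₂ = Real.sqrt 2 := by
    rw [dist2 v₁ v₂ 1 0 0 1 hv₁ hv₂]; norm_num
  have d32 : dist v₃ v₂ = Real.sqrt 5 := by
    rw [dist2 v₃ v₂ (-1) (-1) 0 1 hv₃ hv₂]; norm_num
  have d13 : dist v₁ v₃ = Real.sqrt 5 := by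
    rw [dist2 v₁ v₃ 1 0 (-1) (-1) hv₁ hv₃]; norm_num
  have d23 : dist v₂ v₃ = Real.sqrt 5 := by
    rw [dist2 v₂ v₃ 0 1 (-1) (-1) hv₂ hv₃]; norm_num
  have d1c : dist v₁ c = Real.sqrt (1/2) := by
    rw [dist2 v₁ c 1 0 0.5 0.5 hv₁ hc]; norm_num
  have d2c : dist v₂ c = Real.sqrt (1/2) := by
    rw [dist2 v₂ c 0 1 0.5 0.5 hv₂ hc]; norm_num
  have d3c : dist v₃ c = Real.sqrt (9/2) := by
    rw [dist2 v₃ c (-1) (-1) 0.5 0.5 hv₃ hc]; norm_num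
  have dc2 : dist c v₂ = Real.sqrt (1/2) := by rw [dist_comm]; exact d2c
  have dc3 : dist c v₃ = Real.sqrt (9/2) := by rw [dist_comm]; exact d3c
  -- numeric facts
  have sq2 : Real.sqrt 2 ^ 2 = 2 := Real.sq_sqrt (by norm_num)
  have sq5 : Real.sqrt 5 ^ 2 = 5 := Real.sq_sqrt (by norm_num)
  have sqh : Real.sqrt (1/2) ^ 2 = 1/2 := Real.sq_sqrt (by norm_num)
  have hs2 : 1 ≤ Real.sqrt 2 := by
    have := Real.sqrt_le_sqrt (show (1:ℝ) ≤ 2 by norm_num)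
    rwa [Real.sqrt_one] at this
  have hs25 : Real.sqrt 2 ≤ Real.sqrt 5 := Real.sqrt_le_sqrt (by norm_num)
  have hs15 : 1 ≤ Real.sqrt 5 := le_trans hs2 hs25
  have h29 : Real.sqrt 2 ≤ Real.sqrt (9/2) := Real.sqrt_le_sqrt (by norm_num)
  have hhp : 0 < Real.sqrt (1/2) := Real.sqrt_pos.mpr (by norm_num)
  have hh1 : Real.sqrt (1/2) < 1 := by nlinarith [hhp, sqh]
  have hmid : 1 - Real.sqrt (1/2) ≤ Real.sqrt (1/2) := by nlinarith [hhp, sqh]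
  have hpos : 0 < 1 - Real.sqrt (1/2) := by linarith
  have e1 : (Real.sqrt 2)⁻¹ = Real.sqrt (1/2) := by
    rw [← Real.sqrt_inv]; norm_num
  have e2 : Real.sqrt 9 / Real.sqrt 2 = Real.sqrt (9/2) := by
    rw [← Real.sqrt_div (by norm_num : (0:ℝ) ≤ 9)]
  -- reported profile entries
  have hr0 : r 0 = c := by rw [hrep]; rfl
  have hr1 : r 1 = v₂ := by rw [hrep]; rfl
  have hr2 : r 2 = v₃ := by rw [hrep]; rfl
  refine ⟨?_, by ring, ?_, ?_, ?_, by rw [d1s, d1c], hpos⟩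
  · rintro p (rfl | rfl | rfl)
    · have : {j : Fin 3 | 0 < dist (sincere j) s₀ - dist (sincere j) p} = {0} := by
        ext j; simp only [Set.mem_setOf_eq, Set.mem_singleton_iff]
        fin_cases j <;>
          simp [hsin, d1s, d2s, d3s, d11, d21, d31] <;> linarith [e1, e2]
      rw [this, Set.ncard_singleton]; norm_num
    · have : {j : Fin 3 | 0 < dist (sincere j) s₀ - dist (sincere j) p} = {1} := by
        ext j; simp only [Set.mem_setOf_eq, Set.mem_singleton_iff]
        fin_cases j <;>
          simp [hsin, d1s, d2s, d3s, d12, d22, d32] <;> linarith [e1, e2]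
      rw [this, Set.ncard_singleton]; norm_num
    · have : {j : Fin 3 | 0 < dist (sincere j) s₀ - dist (sincere j) p} = {2} := by
        ext j; simp only [Set.mem_setOf_eq, Set.mem_singleton_iff]
        fin_cases j <;>
          simp [hsin, d1s, d2s, d3s, d13, d23, d33] <;> linarith [e1, e2]
      rw [this, Set.ncard_singleton]; norm_num
  · have : {j : Fin 3 | 0 < dist (r j) s₀ - dist (r j) c} = {0, 1} := by
      ext j; simp only [Set.mem_setOf_eq, Set.mem_insert_iff, Set.mem_singleton_iff]
      fin_cases j <;>
        simp [hr0, hr1, hr2, dcs, d2s, d3s, dcc, d2c, d3c] <;> linarith [e1, e2]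
    rw [this, Set.ncard_pair (by decide)]
  · have := kth2 (fun j => dist (r j) s₀ - dist (r j) c)
      (by simp only [hr1, hr2, d2s, d3s, d2c, d3c]; linarith)
      (by simp only [hr0, hr1, dcs, d2s, dcc, d2c]; linarith)
    rw [this]
    simp only [hr1, d2s, d2c]
    linarith
  · rintro p (rfl | rfl | rfl)
    · intro _; exact le_refl _
    · intro hcard; exfalso
      have : {j : Fin 3 | 0 < dist (r j) s₀ - dist (r j) p} = {1} := by
        ext j; simp only [Set.mem_setOf_eq, Set.mem_singleton_iff]
        fin_cases j <;>
          simp [hr0, hr1, hr2, dcs, d2s, d3s, dc2, d22, d32] <;> linarith [e1, e2]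
      rw [this, Set.ncard_singleton] at hcard; omega
    · intro hcard; exfalso
      have : {j : Fin 3 | 0 < dist (r j) s₀ - dist (r j) p} = {2} := by
        ext j; simp only [Set.mem_setOf_eq, Set.mem_singleton_iff]
        fin_cases j <;>
          simp [hr0, hr1, hr2, dcs, d2s, d3s, dc3, d23, d33] <;> linarith [e1, e2]
      rw [this, Set.ncard_singleton] at hcard; omega
end

section
/- 1D monotonicity of the median instance: In X ⊆ ℝ with the absolute-value metric and σ = 1/2 (n odd), the constitutional governance rule with the generalised median is monotone: if w is a co-winner under profile V (its median utility |v_m − s| − |v_m − w| is maximal among proposals), and member i changes their vote to w, yielding a new positional median v_m' that moves weakly towards w, then (i) the median utility of w weakly increases (since |v_m' − w| ≤ |v_m − w|), and (ii) for every former co-winner p, the median utility of w in the new profile is at least that of p. Hence w does not lose. -/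
lemma sorted_getElem_le_iff (l : List ℝ) (hl : l.Pairwise (· ≤ ·)) (j : ℕ) (hj : j < l.length)
    (c : ℝ) : l.getD j 0 ≤ c ↔ j + 1 ≤ l.countP (fun a => decide (a ≤ c)) := by
  rw [List.getD_eq_getElem _ _ hj]
  constructor
  · intro h
    have h1 : ∀ a ∈ l.take (j+1), (fun a => decide (a ≤ c)) a = true := by
      intro a ha
      rw [List.mem_take_iff_getElem] at ha
      obtain ⟨m, hm, rfl⟩ := ha
      have hm' : m < l.length := lt_of_lt_of_le hm (min_le_right _ _)
      have : l.get ⟨m, hm'⟩ ≤ l.get ⟨j, hj⟩ := by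
        apply hl.rel_get_of_le
        simp only [Fin.mk_le_mk]
        omega
      simp only [List.get_eq_getElem] at this
      simp only [decide_eq_true_eq]
      linarith
    have h2 := List.countP_eq_length.2 h1
    calc j + 1 = (l.take (j+1)).length := by rw [List.length_take]; omega
      _ = (l.take (j+1)).countP (fun a => decide (a ≤ c)) := h2.symm
      _ ≤ l.countP _ := by
          conv_rhs => rw [← List.take_append_drop (j+1) l]
          rw [List.countP_append]; omega
  · intro h
    by_contra hc
    push_neg at hc
    have h0 : (l.drop j).countP (fun a => decide (a ≤ c)) = 0 := by
      rw [List.countP_eq_zero]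
      intro a ha
      rw [List.mem_drop_iff_getElem] at ha
      obtain ⟨m, hm, rfl⟩ := ha
      have : l.get ⟨j, hj⟩ ≤ l.get ⟨j + m, by omega⟩ := by
        apply hl.rel_get_of_le
        simp only [Fin.mk_le_mk]; omega
      simp only [List.get_eq_getElem] at this
      simp only [decide_eq_true_eq]
      push_neg
      linarith
    have := List.countP_le_length (p := fun a => decide (a ≤ c)) (l := l.take j)
    rw [List.length_take] at this
    conv at h => rw [← List.take_append_drop j l]
    rw [List.countP_append, h0] at h
    omega


lemma kthSmallest_le_iff {n : ℕ} (u : Fin n → ℝ) (k : ℕ) (hk1 : 1 ≤ k) (hkn : k ≤ n) (c : ℝ) :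
    kthSmallest u k ≤ c ↔ k ≤ (List.ofFn u).countP (fun a => decide (a ≤ c)) := by
  set l := (List.ofFn u).insertionSort (fun a b => a ≤ b) with hl
  have hlen : l.length = n := by
    rw [hl, List.length_insertionSort, List.length_ofFn]
  have hsorted : l.Pairwise (· ≤ ·) := List.pairwise_insertionSort _ _
  have hperm : List.Perm l (List.ofFn u) := List.perm_insertionSort _ _
  have hcount := hperm.countP_eq (fun a => decide (a ≤ c))
  rw [← hcount]
  have hj : k - 1 < l.length := by omega
  have := sorted_getElem_le_iff l hsorted (k-1) hj c
  rw [kthSmallest, ← hl, this]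
  omega

lemma countP_ofFn_le {n : ℕ} (u u' : Fin n → ℝ) (c c' : ℝ)
    (h : ∀ j, u j ≤ c → u' j ≤ c') :
    (List.ofFn u).countP (fun a => decide (a ≤ c)) ≤
      (List.ofFn u').countP (fun a => decide (a ≤ c')) := by
  rw [List.ofFn_eq_map, List.ofFn_eq_map, List.countP_map, List.countP_map]
  apply List.countP_mono_left
  intro j _
  simp only [Function.comp, decide_eq_true_eq]
  exact h j

lemma kth_between {n : ℕ} (k : ℕ) (hk1 : 1 ≤ k) (hkn : k ≤ n)
    (v : Fin n → ℝ) (i : Fin n) (w : ℝ) :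
    min (kthSmallest v k) w ≤ kthSmallest (Function.update v i w) k ∧
      kthSmallest (Function.update v i w) k ≤ max (kthSmallest v k) w := by
  set m := kthSmallest v k with hm
  set v' := Function.update v i w with hv'
  set m' := kthSmallest v' k with hm'
  have hrefl : k ≤ (List.ofFn v).countP (fun a => decide (a ≤ m)) :=
    (kthSmallest_le_iff v k hk1 hkn m).1 le_rfl
  constructor
  · by_contra hc
    push_neg at hc
    have h1 : k ≤ (List.ofFn v').countP (fun a => decide (a ≤ m')) :=
      (kthSmallest_le_iff v' k hk1 hkn m').1 le_rfl
    have h2 : (List.ofFn v').countP (fun a => decide (a ≤ m')) ≤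
        (List.ofFn v).countP (fun a => decide (a ≤ m')) := by
      apply countP_ofFn_le
      intro j hj
      by_cases hji : j = i
      · subst hji
        rw [hv', Function.update_self] at hj
        exfalso
        have : w ≤ m' := hj
        have : m' < w := lt_of_lt_of_le hc (min_le_right _ _)
        linarith
      · rw [hv', Function.update_of_ne hji] at hj; exact hj
    have h3 : m ≤ m' := (kthSmallest_le_iff v k hk1 hkn m').2 (le_trans h1 h2)
    have : m' < m := lt_of_lt_of_le hc (min_le_left _ _)
    linarith
  · apply (kthSmallest_le_iff v' k hk1 hkn _).2
    refine le_trans hrefl (countP_ofFn_le v v' m (max m w) ?_)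
    intro j hj
    by_cases hji : j = i
    · subst hji; rw [hv', Function.update_self]; exact le_max_right _ _
    · rw [hv', Function.update_of_ne hji]; exact le_trans hj (le_max_left _ _)

/-- 1D monotonicity of the median instance. With `n` odd, `σ = 1/2`,
median utility of `p` equal to `|v_m − s| − |v_m − p|`: if `w` is a co-winner and
member `i` moves their vote to `w`, then the median utility of `w` weakly increases,
and for every former co-winner `p` the new median utility of `w` is at least that of
`p`; indeed `w` does not lose to any proposal. -/
theorem oneD_monotone
    {n : ℕ} (hn : 0 < n) (hodd : Odd n)
    (k : ℕ) (hk : k = (n + 1) / 2)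
    (s : ℝ) (v : Fin n → ℝ)
    (P : Finset ℝ) (w : ℝ) (hwP : w ∈ P)
    (vm : ℝ) (hvm : vm = kthSmallest v k)
    (hcw : ∀ p ∈ P, |vm - s| - |vm - p| ≤ |vm - s| - |vm - w|)
    (i : Fin n) (v' : Fin n → ℝ) (hv' : v' = Function.update v i w)
    (vm' : ℝ) (hvm' : vm' = kthSmallest v' k) :
    (|vm' - w| ≤ |vm - w|) ∧
    (|vm - s| - |vm - w| ≤ |vm' - s| - |vm' - w|) ∧
    (∀ p ∈ P, |vm - s| - |vm - p| = |vm - s| - |vm - w| →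
      |vm' - s| - |vm' - p| ≤ |vm' - s| - |vm' - w|) ∧
    (∀ p ∈ P, |vm' - s| - |vm' - p| ≤ |vm' - s| - |vm' - w|) := by
  have hk1 : 1 ≤ k := by omega
  have hkn : k ≤ n := by obtain ⟨t, ht⟩ := hodd; omega
  have hbet := kth_between k hk1 hkn v i w
  rw [← hvm, ← hv', ← hvm'] at hbet
  obtain ⟨hlo, hhi⟩ := hbet
  have hA : |vm - w| = |vm - vm'| + |vm' - w| := by
    rcases le_total vm w with h | h
    · have h1 : vm ≤ vm' := le_trans (by rw [min_eq_left h]) hlo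
      have h2 : vm' ≤ w := le_trans hhi (by rw [max_eq_right h])
      rw [abs_of_nonpos (by linarith), abs_of_nonpos (by linarith),
        abs_of_nonpos (by linarith)]
      ring
    · have h1 : w ≤ vm' := le_trans (by rw [min_eq_right h]) hlo
      have h2 : vm' ≤ vm := le_trans hhi (by rw [max_eq_left h])
      rw [abs_of_nonneg (by linarith), abs_of_nonneg (by linarith),
        abs_of_nonneg (by linarith)]
      ring
  have hB : |vm - s| ≤ |vm - vm'| + |vm' - s| := abs_sub_le vm vm' s
  have key : ∀ p ∈ P, |vm' - w| ≤ |vm' - p| := by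
    intro p hp
    have hCp : |vm - p| ≤ |vm - vm'| + |vm' - p| := abs_sub_le vm vm' p
    have := hcw p hp
    linarith
  refine ⟨by linarith [abs_nonneg (vm - vm')], by linarith, fun p hp _ => by linarith [key p hp],
    fun p hp => by linarith [key p hp]⟩
end

section
/- Non-monotonicity in general metric spaces: There exists a finite metric space, a status quo s, a 7-voter profile, and proposals w and p such that under the original profile w has strictly greater 4th-largest utility (median of 7) than p and than every other proposal, so w uniquely wins; but after one voter moves their ideal to w, the 4th-largest utility of p strictly exceeds that of w, so w loses. Concretely: d(w,s) = d(p,s) = 10, d(w,p) = 5, five other voters at distance 10 from s with utilities for (w, p) equal to (−3, −6), (−2, −4), (−1, −2), (0.01, −0.01), (0.02, 0.1), plus voters at p and w themselves; before the move the medians are 0.01 vs −0.01 (w wins), after voter 4 moves to w the medians are 0.02 vs 0.1 (p wins). -/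
/-- Integer distance matrix (distances ×100): indices 0=s, 1=w, 2=p, 3..7 = voters 0..4. -/
def Dq : Fin 8 → Fin 8 → ℤ :=
  ![ ![0, 1000, 1000, 1000, 1000, 1000, 1000, 1000],
    ![1000, 0, 500, 1300, 1200, 1100, 999, 998],
    ![1000, 500, 0, 1600, 1400, 1200, 1001, 990],
    ![1000, 1300, 1600, 0, 2000, 2000, 2000, 2000],
    ![1000, 1200, 1400, 2000, 0, 2000, 2000, 2000],
    ![1000, 1100, 1200, 2000, 2000, 0, 2000, 2000],
    ![1000, 999, 1001, 2000, 2000, 2000, 0, 1991],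
    ![1000, 998, 990, 2000, 2000, 2000, 1991, 0]]

@[simp] lemma DqE_0_0 : Dq 0 0 = 0 := rfl
@[simp] lemma DqE_0_1 : Dq 0 1 = 1000 := rfl
@[simp] lemma DqE_0_2 : Dq 0 2 = 1000 := rfl
@[simp] lemma DqE_0_3 : Dq 0 3 = 1000 := rfl
@[simp] lemma DqE_0_4 : Dq 0 4 = 1000 := rfl
@[simp] lemma DqE_0_5 : Dq 0 5 = 1000 := rfl
@[simp] lemma DqE_0_6 : Dq 0 6 = 1000 := rfl
@[simp] lemma DqE_0_7 : Dq 0 7 = 1000 := rfl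
@[simp] lemma DqE_1_0 : Dq 1 0 = 1000 := rfl
@[simp] lemma DqE_1_1 : Dq 1 1 = 0 := rfl
@[simp] lemma DqE_1_2 : Dq 1 2 = 500 := rfl
@[simp] lemma DqE_1_3 : Dq 1 3 = 1300 := rfl
@[simp] lemma DqE_1_4 : Dq 1 4 = 1200 := rfl
@[simp] lemma DqE_1_5 : Dq 1 5 = 1100 := rfl
@[simp] lemma DqE_1_6 : Dq 1 6 = 999 := rfl
@[simp] lemma DqE_1_7 : Dq 1 7 = 998 := rfl
@[simp] lemma DqE_2_0 : Dq 2 0 = 1000 := rfl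
@[simp] lemma DqE_2_1 : Dq 2 1 = 500 := rfl
@[simp] lemma DqE_2_2 : Dq 2 2 = 0 := rfl
@[simp] lemma DqE_2_3 : Dq 2 3 = 1600 := rfl
@[simp] lemma DqE_2_4 : Dq 2 4 = 1400 := rfl
@[simp] lemma DqE_2_5 : Dq 2 5 = 1200 := rfl
@[simp] lemma DqE_2_6 : Dq 2 6 = 1001 := rfl
@[simp] lemma DqE_2_7 : Dq 2 7 = 990 := rfl
@[simp] lemma DqE_3_0 : Dq 3 0 = 1000 := rfl
@[simp] lemma DqE_3_1 : Dq 3 1 = 1300 := rfl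
@[simp] lemma DqE_3_2 : Dq 3 2 = 1600 := rfl
@[simp] lemma DqE_3_3 : Dq 3 3 = 0 := rfl
@[simp] lemma DqE_3_4 : Dq 3 4 = 2000 := rfl
@[simp] lemma DqE_3_5 : Dq 3 5 = 2000 := rfl
@[simp] lemma DqE_3_6 : Dq 3 6 = 2000 := rfl
@[simp] lemma DqE_3_7 : Dq 3 7 = 2000 := rfl
@[simp] lemma DqE_4_0 : Dq 4 0 = 1000 := rfl
@[simp] lemma DqE_4_1 : Dq 4 1 = 1200 := rfl
@[simp] lemma DqE_4_2 : Dq 4 2 = 1400 := rfl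
@[simp] lemma DqE_4_3 : Dq 4 3 = 2000 := rfl
@[simp] lemma DqE_4_4 : Dq 4 4 = 0 := rfl
@[simp] lemma DqE_4_5 : Dq 4 5 = 2000 := rfl
@[simp] lemma DqE_4_6 : Dq 4 6 = 2000 := rfl
@[simp] lemma DqE_4_7 : Dq 4 7 = 2000 := rfl
@[simp] lemma DqE_5_0 : Dq 5 0 = 1000 := rfl
@[simp] lemma DqE_5_1 : Dq 5 1 = 1100 := rfl
@[simp] lemma DqE_5_2 : Dq 5 2 = 1200 := rfl
@[simp] lemma DqE_5_3 : Dq 5 3 = 2000 := rfl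
@[simp] lemma DqE_5_4 : Dq 5 4 = 2000 := rfl
@[simp] lemma DqE_5_5 : Dq 5 5 = 0 := rfl
@[simp] lemma DqE_5_6 : Dq 5 6 = 2000 := rfl
@[simp] lemma DqE_5_7 : Dq 5 7 = 2000 := rfl
@[simp] lemma DqE_6_0 : Dq 6 0 = 1000 := rfl
@[simp] lemma DqE_6_1 : Dq 6 1 = 999 := rfl
@[simp] lemma DqE_6_2 : Dq 6 2 = 1001 := rfl
@[simp] lemma DqE_6_3 : Dq 6 3 = 2000 := rfl
@[simp] lemma DqE_6_4 : Dq 6 4 = 2000 := rfl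
@[simp] lemma DqE_6_5 : Dq 6 5 = 2000 := rfl
@[simp] lemma DqE_6_6 : Dq 6 6 = 0 := rfl
@[simp] lemma DqE_6_7 : Dq 6 7 = 1991 := rfl
@[simp] lemma DqE_7_0 : Dq 7 0 = 1000 := rfl
@[simp] lemma DqE_7_1 : Dq 7 1 = 998 := rfl
@[simp] lemma DqE_7_2 : Dq 7 2 = 990 := rfl
@[simp] lemma DqE_7_3 : Dq 7 3 = 2000 := rfl
@[simp] lemma DqE_7_4 : Dq 7 4 = 2000 := rfl
@[simp] lemma DqE_7_5 : Dq 7 5 = 2000 := rfl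
@[simp] lemma DqE_7_6 : Dq 7 6 = 1991 := rfl
@[simp] lemma DqE_7_7 : Dq 7 7 = 0 := rfl

noncomputable def myMS : MetricSpace (Fin 8) where
  dist i j := (Dq i j : ℝ) / 100
  dist_self i := by
    have h : Dq i i = 0 := by revert i; decide
    show (Dq i i : ℝ) / 100 = 0
    rw [h]; norm_num
  dist_comm i j := by
    have h : Dq i j = Dq j i := by revert i j; decide
    show (Dq i j : ℝ) / 100 = (Dq j i : ℝ) / 100
    rw [h]
  dist_triangle i j k := by
    have h : Dq i k ≤ Dq i j + Dq j k := by revert i j k; decide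
    have h' : ((Dq i k : ℝ)) ≤ (Dq i j : ℝ) + (Dq j k : ℝ) := by exact_mod_cast h
    show (Dq i k : ℝ) / 100 ≤ (Dq i j : ℝ) / 100 + (Dq j k : ℝ) / 100
    linarith
  eq_of_dist_eq_zero {i j} h := by
    have h0 : (Dq i j : ℝ) / 100 = 0 := h
    rw [div_eq_zero_iff] at h0
    have h'' : Dq i j = 0 := by
      rcases h0 with h1 | h1
      · exact_mod_cast h1
      · norm_num at h1
    exact (by decide : ∀ i j : Fin 8, Dq i j = 0 → i = j) i j h'' 
  edist_dist i j := by
    exact (ENNReal.ofReal_eq_coe_nnreal _).symm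

/-- Non-monotonicity in general metric spaces. There is a finite metric
space, a status quo `s`, a 7-voter profile, and proposals `w, p` with the stated
distances and utilities, such that before the move `w` has median (4th-largest of 7)
utility `0.01 > −0.01` (and beats every other proposal), but after voter 4 moves to `w`
the medians become `0.02` for `w` and `0.1` for `p`, so `w` loses to `p`. -/
theorem non_monotone_general :
    ∃ (X : Type) (_ : MetricSpace X) (_ : Fintype X) (s w p : X) (vot : Fin 7 → X),
      dist w s = 10 ∧ dist p s = 10 ∧ dist w p = 5 ∧
      (∀ j : Fin 7, dist (vot j) s = 10) ∧
      vot 5 = p ∧ vot 6 = w ∧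
      dist (vot 0) s - dist (vot 0) w = -3 ∧ dist (vot 0) s - dist (vot 0) p = -6 ∧
      dist (vot 1) s - dist (vot 1) w = -2 ∧ dist (vot 1) s - dist (vot 1) p = -4 ∧
      dist (vot 2) s - dist (vot 2) w = -1 ∧ dist (vot 2) s - dist (vot 2) p = -2 ∧
      dist (vot 3) s - dist (vot 3) w = 0.01 ∧ dist (vot 3) s - dist (vot 3) p = -0.01 ∧
      dist (vot 4) s - dist (vot 4) w = 0.02 ∧ dist (vot 4) s - dist (vot 4) p = 0.1 ∧
      kthLargest (fun j => dist (vot j) s - dist (vot j) w) 4 = 0.01 ∧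
      kthLargest (fun j => dist (vot j) s - dist (vot j) p) 4 = -0.01 ∧
      (∀ q : X, q ≠ w → (q = p ∨ ∃ j : Fin 7, q = vot j) →
        kthLargest (fun j => dist (vot j) s - dist (vot j) q) 4 <
          kthLargest (fun j => dist (vot j) s - dist (vot j) w) 4) ∧
      kthLargest (fun j => dist (Function.update vot 3 w j) s -
        dist (Function.update vot 3 w j) w) 4 = 0.02 ∧
      kthLargest (fun j => dist (Function.update vot 3 w j) s -
        dist (Function.update vot 3 w j) p) 4 = 0.1 ∧
      kthLargest (fun j => dist (Function.update vot 3 w j) s -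
          dist (Function.update vot 3 w j) w) 4 <
        kthLargest (fun j => dist (Function.update vot 3 w j) s -
          dist (Function.update vot 3 w j) p) 4 := by
  letI : MetricSpace (Fin 8) := myMS
  refine ⟨Fin 8, inferInstance, inferInstance, 0, 1, 2, ![3, 4, 5, 6, 7, 2, 1], ?_⟩
  have hd : ∀ i j : Fin 8, dist i j = (Dq i j : ℝ) / 100 := fun _ _ => rfl
  have hvot : ∀ j : Fin 7, Dq (![3, 4, 5, 6, 7, 2, 1] j) 0 = 1000 := by decide
  have hupd : Function.update (![3, 4, 5, 6, 7, 2, 1] : Fin 7 → Fin 8) 3 1 = ![3, 4, 5, 1, 7, 2, 1] := by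
    funext j; revert j; decide
  refine ⟨?_, ?_, ?_, ?_, rfl, rfl, ?_, ?_, ?_, ?_, ?_, ?_, ?_, ?_, ?_, ?_, ?_, ?_, ?_, ?_, ?_, ?_⟩
  · simp only [hd]; norm_num
  · simp only [hd]; norm_num
  · simp only [hd]; norm_num
  · intro j; rw [hd, hvot j]; norm_num
  · simp only [hd]; norm_num
  · simp only [hd]; norm_num
  · simp only [hd]; norm_num
  · simp only [hd]; norm_num
  · simp only [hd, Matrix.cons_val]; norm_num
  · simp only [hd, Matrix.cons_val]; norm_num
  · simp only [hd, Matrix.cons_val]; norm_num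
  · simp only [hd, Matrix.cons_val]; norm_num
  · simp only [hd, Matrix.cons_val]; norm_num
  · simp only [hd, Matrix.cons_val]; norm_num
  · simp only [kthLargest, List.ofFn_succ, List.ofFn_zero,
      List.insertionSort, List.orderedInsert, hd, Matrix.cons_val, Matrix.cons_val_succ, Matrix.cons_val_zero]; norm_num
  · simp only [kthLargest, List.ofFn_succ, List.ofFn_zero,
      List.insertionSort, List.orderedInsert, hd, Matrix.cons_val, Matrix.cons_val_succ, Matrix.cons_val_zero]; norm_num
  · intro q hq hmem
    have hq8 : q = 2 ∨ q = 3 ∨ q = 4 ∨ q = 5 ∨ q = 6 ∨ q = 7 := by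
      revert hmem; revert hq; revert q; decide
    rcases hq8 with h | h | h | h | h | h <;> subst h <;>
      (simp only [kthLargest, List.ofFn_succ, List.ofFn_zero,
        List.insertionSort, List.orderedInsert, hd, Matrix.cons_val, Matrix.cons_val_succ, Matrix.cons_val_zero]; norm_num)
  · simp only [kthLargest, List.ofFn_succ, List.ofFn_zero,
      List.insertionSort, List.orderedInsert, hupd, hd, Matrix.cons_val, Matrix.cons_val_succ, Matrix.cons_val_zero]; norm_num
  · simp only [kthLargest, List.ofFn_succ, List.ofFn_zero,
      List.insertionSort, List.orderedInsert, hupd, hd, Matrix.cons_val, Matrix.cons_val_succ, Matrix.cons_val_zero]; norm_num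
  · simp only [kthLargest, List.ofFn_succ, List.ofFn_zero,
      List.insertionSort, List.orderedInsert, hupd, hd, Matrix.cons_val, Matrix.cons_val_succ, Matrix.cons_val_zero]; norm_num
end
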